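/- Fix 1 ≤ p ≤ ∞ and k ∈ ℕ. In ℝ^{2^k} with the ℓ_p norm, let A = {0} ∪ {wᵢ}_{i=1}^{2^k} ∪ {eᵢ}_{i=1}^{2^k} where the eᵢ are the standard basis vectors and the wᵢ are the rows of the 2^k × 2^k Walsh matrix, so n = |A| = 2·2^k + 1. Then for every d ∈ ℕ, every D ≥ 1, and every linear map T : ℝ^{2^k} → ℝ^d satisfying ‖u − v‖_p ≤ ‖T(u) − T(v)‖_p ≤ D·‖u − v‖_p for all u, v ∈ A (where the target carries the ℓ_p norm on ℝ^d), one has D ≥ ((n−1)/(2d))^{|1/p − 1/2|}. -/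

import Mathlib

/-!
Write `m = 2^k`, `e_v` for the basis vectors and `w_u = ∑_v W_{uv} e_v` for the Walsh rows.
Since `W Wᵀ = m I`, every linear `T` satisfies `∑_u ‖T w_u‖₂² = m ∑_v ‖T e_v‖₂²`.
Moreover `‖e_v‖_p = 1`, `‖w_u‖_p = m^{1/p}`, and on `ℝ^d` the `ℓ_p` and `ℓ_2` norms are
comparable: the one with the larger exponent is smaller, by at most the factor `d^{|1/p - 1/2|}`.
For `p ≤ 2` this bounds every `‖T e_v‖₂` from above by `D` and every `‖T w_u‖₂` from below by
`d^{1/2-1/p} m^{1/p}`; for `p ≥ 2` it bounds `‖T e_v‖₂ ≥ 1` and `‖T w_u‖₂ ≤ d^{1/2-1/p} D m^{1/p}`.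
Either pair of bounds, fed into the identity, gives `D ≥ (m/d)^{|1/p - 1/2|}`.
-/

open scoped ENNReal

/-- The `2^k × 2^k` Walsh matrix, with rows and columns indexed by `Fin k → Bool`
(i.e. `𝔽₂^k`): its `(u, v)` entry is `(-1)^⟨u,v⟩` where `⟨u,v⟩ = #{i : uᵢ = vᵢ = 1}`.
This is the `k`-fold Kronecker power of `[[1,1],[1,-1]]`. -/
noncomputable def walshRow (k : ℕ) (u : Fin k → Bool) : (Fin k → Bool) → ℝ :=
  fun v => (-1 : ℝ) ^ (Finset.univ.filter fun i => u i && v i).card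

noncomputable def walshPointSet (p : ℝ≥0∞) (k : ℕ) :
    Set (PiLp p fun _ : Fin k → Bool => ℝ) :=
  {0} ∪ Set.range (fun u => (WithLp.equiv p _).symm (walshRow k u)) ∪
    Set.range (fun u : Fin k → Bool => (WithLp.equiv p _).symm (Pi.single u 1))

open Finset WithLp

namespace Real

variable {ι : Type*} {s : Finset ι} {f : ι → ℝ}

lemma sum_rpow_le_rpow_sum (hf : ∀ i ∈ s, 0 ≤ f i) {t : ℝ} (ht : 1 ≤ t) :
    ∑ i ∈ s, f i ^ t ≤ (∑ i ∈ s, f i) ^ t := by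
  have hS : 0 ≤ ∑ i ∈ s, f i := sum_nonneg hf
  calc ∑ i ∈ s, f i ^ t = ∑ i ∈ s, f i * f i ^ (t - 1) := by
        refine sum_congr rfl fun i hi => ?_
        rw [← rpow_one_add' (hf i hi) (by linarith), add_sub_cancel]
    _ ≤ ∑ i ∈ s, f i * (∑ j ∈ s, f j) ^ (t - 1) := by
        gcongr with i hi
        exacts [hf i hi, hf i hi, single_le_sum hf hi]
    _ = (∑ i ∈ s, f i) ^ t := by
        rw [← sum_mul, ← rpow_one_add' hS (by linarith), add_sub_cancel]

lemma Lq_le_Lp_of_le (hf : ∀ i ∈ s, 0 ≤ f i) {p q : ℝ} (hp : 0 < p) (hpq : p ≤ q) :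
    (∑ i ∈ s, f i ^ q) ^ (1 / q) ≤ (∑ i ∈ s, f i ^ p) ^ (1 / p) := by
  have hq : 0 < q := hp.trans_le hpq
  have hfp : ∀ i ∈ s, 0 ≤ f i ^ p := fun i hi => rpow_nonneg (hf i hi) p
  have key := sum_rpow_le_rpow_sum hfp ((one_le_div hp).mpr hpq)
  have hpow : ∀ i ∈ s, (f i ^ p) ^ (q / p) = f i ^ q := fun i hi => by
    rw [← rpow_mul (hf i hi), mul_div_cancel₀ _ hp.ne']
  rw [sum_congr rfl hpow] at key
  calc (∑ i ∈ s, f i ^ q) ^ (1 / q) ≤ ((∑ i ∈ s, f i ^ p) ^ (q / p)) ^ (1 / q) := by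
        gcongr
        exact sum_nonneg fun i hi => rpow_nonneg (hf i hi) q
    _ = (∑ i ∈ s, f i ^ p) ^ (1 / p) := by
        rw [← rpow_mul (sum_nonneg hfp)]
        field_simp

lemma Lp_le_card_rpow_mul_Lq (hf : ∀ i ∈ s, 0 ≤ f i) {p q : ℝ} (hp : 0 < p) (hpq : p ≤ q) :
    (∑ i ∈ s, f i ^ p) ^ (1 / p) ≤ (#s : ℝ) ^ (1 / p - 1 / q) * (∑ i ∈ s, f i ^ q) ^ (1 / q) := by
  have hq : 0 < q := hp.trans_le hpq
  have hfp : ∀ i ∈ s, 0 ≤ f i ^ p := fun i hi => rpow_nonneg (hf i hi) p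
  have key := rpow_sum_le_const_mul_sum_rpow_of_nonneg s ((one_le_div hp).mpr hpq) hfp
  have hpow : ∀ i ∈ s, (f i ^ p) ^ (q / p) = f i ^ q := fun i hi => by
    rw [← rpow_mul (hf i hi), mul_div_cancel₀ _ hp.ne']
  rw [sum_congr rfl hpow] at key
  calc (∑ i ∈ s, f i ^ p) ^ (1 / p) = ((∑ i ∈ s, f i ^ p) ^ (q / p)) ^ (1 / q) := by
        rw [← rpow_mul (sum_nonneg hfp)]
        field_simp
    _ ≤ ((#s : ℝ) ^ (q / p - 1) * ∑ i ∈ s, f i ^ q) ^ (1 / q) := by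
        gcongr
        exact rpow_nonneg (sum_nonneg hfp) _
    _ = (#s : ℝ) ^ (1 / p - 1 / q) * (∑ i ∈ s, f i ^ q) ^ (1 / q) := by
        rw [mul_rpow (by positivity) (sum_nonneg fun i hi => rpow_nonneg (hf i hi) q),
          ← rpow_mul (by positivity)]
        congr 2
        field_simp

end Real

namespace PiLp

variable {ι : Type*} [Fintype ι] {β : ι → Type*}

lemma norm_toLp_congr [∀ i, Norm (β i)] (p : ℝ≥0∞) {x y : ∀ i, β i}
    (h : ∀ i, ‖x i‖ = ‖y i‖) : ‖toLp p x‖ = ‖toLp p y‖ := by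
  change ite _ _ _ = ite _ _ _
  simp only [h]

variable [∀ i, SeminormedAddCommGroup (β i)]

lemma norm_toLp_le_norm_toLp_of_le {p q : ℝ≥0∞} [Fact (1 ≤ p)] (hpq : p ≤ q) (x : ∀ i, β i) :
    ‖toLp q x‖ ≤ ‖toLp p x‖ := by
  rcases eq_or_ne q ∞ with rfl | hq
  · exact Real.iSup_le (fun i => norm_apply_le (toLp p x) i) (norm_nonneg _)
  have hp : p ≠ ∞ := ne_top_of_le_ne_top hq hpq
  have hp0 : 0 < p.toReal := ENNReal.toReal_pos (zero_lt_one.trans_le Fact.out).ne' hp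
  rw [norm_eq_sum hp0, norm_eq_sum (hp0.trans_le (ENNReal.toReal_mono hq hpq))]
  exact Real.Lq_le_Lp_of_le (fun i _ => norm_nonneg _) hp0 (ENNReal.toReal_mono hq hpq)

lemma norm_toLp_le_card_rpow_mul_norm_toLp {p q : ℝ≥0∞} [Fact (1 ≤ p)] (hpq : p ≤ q)
    (x : ∀ i, β i) :
    ‖toLp p x‖ ≤ (Fintype.card ι : ℝ) ^ (1 / p.toReal - 1 / q.toReal) * ‖toLp q x‖ := by
  rcases eq_or_ne q ∞ with rfl | hq
  · simpa [← ENNReal.toReal_inv] using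
      (lipschitzWith_toLp p β).dist_le_mul x 0
  have hp : p ≠ ∞ := ne_top_of_le_ne_top hq hpq
  have hp0 : 0 < p.toReal := ENNReal.toReal_pos (zero_lt_one.trans_le Fact.out).ne' hp
  rw [norm_eq_sum hp0, norm_eq_sum (hp0.trans_le (ENNReal.toReal_mono hq hpq))]
  exact Real.Lp_le_card_rpow_mul_Lq (fun i _ => norm_nonneg _) hp0 (ENNReal.toReal_mono hq hpq)

end PiLp

section Walsh

variable {k : ℕ}

lemma walshRow_eq_prod (u v : Fin k → Bool) :
    walshRow k u v = ∏ i, if u i && v i then -1 else 1 := by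
  rw [walshRow, ← prod_filter, prod_const]

lemma sum_walshRow_mul_walshRow (v v' : Fin k → Bool) :
    ∑ u, walshRow k u v * walshRow k u v' = if v = v' then 2 ^ k else 0 := by
  set g : Fin k → Bool → ℝ := fun i b =>
    (if b && v i then -1 else 1) * (if b && v' i then -1 else 1)
  have hg : ∀ i, ∑ b, g i b = if v i = v' i then 2 else 0 := by
    intro i
    cases hv : v i <;> cases hv' : v' i <;> norm_num [g, hv, hv']
  calc ∑ u, walshRow k u v * walshRow k u v' = ∑ u : Fin k → Bool, ∏ i, g i (u i) := by
        simp only [g, walshRow_eq_prod, ← prod_mul_distrib]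
    _ = ∏ i, if v i = v' i then 2 else 0 := by rw [← Fintype.prod_sum, Fintype.prod_congr _ _ hg]
    _ = if v = v' then 2 ^ k else 0 := by simp [Fintype.prod_ite_zero, funext_iff]

variable {E : Type*} [NormedAddCommGroup E] [InnerProductSpace ℝ E]

lemma sum_norm_sq_walsh_sum (x : (Fin k → Bool) → E) :
    ∑ u, ‖∑ v, walshRow k u v • x v‖ ^ 2 = 2 ^ k * ∑ v, ‖x v‖ ^ 2 := by
  calc ∑ u, ‖∑ v, walshRow k u v • x v‖ ^ 2
      = ∑ v, ∑ v', (∑ u, walshRow k u v * walshRow k u v') * inner ℝ (x v) (x v') := by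
        simp_rw [← real_inner_self_eq_norm_sq, sum_inner, inner_sum, real_inner_smul_left,
          real_inner_smul_right, sum_mul, mul_assoc]
        rw [sum_comm]
        exact sum_congr rfl fun v _ => sum_comm
    _ = 2 ^ k * ∑ v, ‖x v‖ ^ 2 := by
        simp_rw [sum_walshRow_mul_walshRow, ite_mul, zero_mul, sum_ite_eq, if_pos (mem_univ _),
          real_inner_self_eq_norm_sq, mul_sum]

lemma sq_le_two_pow_mul_sq_of_walsh_sum {x : (Fin k → Bool) → E} {A B : ℝ}
    (hA : ∀ v, ‖x v‖ ≤ A) (hB0 : 0 ≤ B) (hB : ∀ u, B ≤ ‖∑ v, walshRow k u v • x v‖) :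
    B ^ 2 ≤ 2 ^ k * A ^ 2 := by
  have h := calc (2 : ℝ) ^ k * B ^ 2 = ∑ _u : Fin k → Bool, B ^ 2 := by simp
    _ ≤ ∑ u, ‖∑ v, walshRow k u v • x v‖ ^ 2 := by gcongr with u; exact hB u
    _ = 2 ^ k * ∑ v, ‖x v‖ ^ 2 := sum_norm_sq_walsh_sum x
    _ ≤ 2 ^ k * ∑ _v : Fin k → Bool, A ^ 2 := by gcongr with v; exact hA v
    _ = 2 ^ k * (2 ^ k * A ^ 2) := by simp
  exact le_of_mul_le_mul_left h (by positivity)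

lemma two_pow_mul_sq_le_sq_of_walsh_sum {x : (Fin k → Bool) → E} {A B : ℝ}
    (hA0 : 0 ≤ A) (hA : ∀ v, A ≤ ‖x v‖) (hB : ∀ u, ‖∑ v, walshRow k u v • x v‖ ≤ B) :
    2 ^ k * A ^ 2 ≤ B ^ 2 := by
  have h := calc (2 : ℝ) ^ k * (2 ^ k * A ^ 2) = 2 ^ k * ∑ _v : Fin k → Bool, A ^ 2 := by simp
    _ ≤ 2 ^ k * ∑ v, ‖x v‖ ^ 2 := by gcongr with v; exact hA v
    _ = ∑ u, ‖∑ v, walshRow k u v • x v‖ ^ 2 := (sum_norm_sq_walsh_sum x).symm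
    _ ≤ ∑ _u : Fin k → Bool, B ^ 2 := by gcongr with u; exact hB u
    _ = 2 ^ k * B ^ 2 := by simp
  exact le_of_mul_le_mul_left h (by positivity)

end Walsh

section PointSet

variable {p : ℝ≥0∞} {k : ℕ}

lemma zero_mem_walshPointSet : (0 : PiLp p fun _ : Fin k → Bool => ℝ) ∈ walshPointSet p k :=
  .inl (.inl rfl)

lemma toLp_walshRow_mem_walshPointSet (u : Fin k → Bool) :
    toLp p (walshRow k u) ∈ walshPointSet p k :=
  .inl (.inr ⟨u, rfl⟩)

lemma toLp_single_mem_walshPointSet (v : Fin k → Bool) :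
    toLp p (Pi.single v (1 : ℝ)) ∈ walshPointSet p k :=
  .inr ⟨v, rfl⟩

lemma norm_toLp_walshRow [Fact (1 ≤ p)] (u : Fin k → Bool) :
    ‖toLp p (walshRow k u)‖ = ((2 : ℝ) ^ k) ^ (1 / p.toReal) := by
  rw [PiLp.norm_toLp_congr p (y := Function.const _ (1 : ℝ)) (fun v => by simp [walshRow]),
    PiLp.norm_toLp_const']
  simp

lemma map_toLp_walshRow {E : Type*} [AddCommGroup E] [Module ℝ E]
    (S : PiLp p (fun _ : Fin k → Bool => ℝ) →ₗ[ℝ] E) (u : Fin k → Bool) :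
    S (toLp p (walshRow k u)) = ∑ v, walshRow k u v • S (toLp p (Pi.single v 1)) := by
  conv_lhs => rw [← univ_sum_single (walshRow k u)]
  simp_rw [toLp_sum, map_sum, ← map_smul, ← toLp_smul, ← Pi.single_smul, smul_eq_mul, mul_one]

end PointSet

lemma Real.div_rpow_sub_mul_rpow_sub_mul_rpow {m d : ℝ} (hm : 0 < m) (hd : 0 < d) (s t : ℝ) :
    (m / d) ^ (s - t) * d ^ (s - t) * m ^ t = m ^ s := by
  rw [Real.div_rpow hm.le hd.le, div_mul_cancel₀ _ (Real.rpow_pos_of_pos hd _).ne',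
    ← Real.rpow_add hm, sub_add_cancel]

noncomputable def PiLp.toEuclidean (p : ℝ≥0∞) (ι : Type*) :
    PiLp p (fun _ : ι => ℝ) ≃ₗ[ℝ] EuclideanSpace ℝ ι :=
  (WithLp.linearEquiv p ℝ (ι → ℝ)).trans (WithLp.linearEquiv 2 ℝ (ι → ℝ)).symm

@[simp]
lemma PiLp.toEuclidean_apply (p : ℝ≥0∞) {ι : Type*} (x : PiLp p (fun _ : ι => ℝ)) :
    PiLp.toEuclidean p ι x = toLp 2 (ofLp x) :=
  rfl

section Distortion

variable {p : ℝ≥0∞} [Fact (1 ≤ p)] {k d : ℕ} {D : ℝ}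
  {T : PiLp p (fun _ : Fin k → Bool => ℝ) →ₗ[ℝ] PiLp p (fun _ : Fin d => ℝ)}

lemma two_pow_div_rpow_le_of_le_two (hp2 : p ≤ 2) (hd : 0 < d) (hD : 0 ≤ D)
    (hT : ∀ x ∈ walshPointSet p k, ‖x‖ ≤ ‖T x‖ ∧ ‖T x‖ ≤ D * ‖x‖) :
    ((2 : ℝ) ^ k / d) ^ (1 / p.toReal - 1 / 2) ≤ D := by
  set S := (PiLp.toEuclidean p (Fin d)).toLinearMap ∘ₗ T
  set c := ((2 : ℝ) ^ k / d) ^ (1 / p.toReal - 1 / 2)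
  have hdE : (0 : ℝ) < (d : ℝ) ^ (1 / p.toReal - 1 / 2) := by positivity
  have hS e : ‖S e‖ ≤ ‖T e‖ := PiLp.norm_toLp_le_norm_toLp_of_le hp2 (ofLp (T e))
  have hS' e : ‖T e‖ ≤ (d : ℝ) ^ (1 / p.toReal - 1 / 2) * ‖S e‖ := by
    simpa [S] using PiLp.norm_toLp_le_card_rpow_mul_norm_toLp hp2 (ofLp (T e))
  have hA v : ‖S (toLp p (Pi.single v 1))‖ ≤ D :=
    (hS _).trans ((hT _ (toLp_single_mem_walshPointSet v)).2.trans_eq (by simp))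
  have hB u : c * √(2 ^ k) ≤ ‖∑ v, walshRow k u v • S (toLp p (Pi.single v 1))‖ := by
    rw [← map_toLp_walshRow, ← mul_le_mul_iff_right₀ hdE, ← mul_assoc, mul_comm _ c,
      Real.sqrt_eq_rpow, Real.div_rpow_sub_mul_rpow_sub_mul_rpow (by positivity) (by positivity),
      ← norm_toLp_walshRow]
    exact (hT _ (toLp_walshRow_mem_walshPointSet u)).1.trans (hS' _)
  have key := sq_le_two_pow_mul_sq_of_walsh_sum hA (by positivity) hB
  rw [mul_pow, Real.sq_sqrt (by positivity), mul_comm] at key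
  exact (pow_le_pow_iff_left₀ (by positivity) hD two_ne_zero).1
    (le_of_mul_le_mul_left key (by positivity))

lemma two_pow_div_rpow_le_of_two_le (h2p : 2 ≤ p) (hd : 0 < d) (hD : 0 ≤ D)
    (hT : ∀ x ∈ walshPointSet p k, ‖x‖ ≤ ‖T x‖ ∧ ‖T x‖ ≤ D * ‖x‖) :
    ((2 : ℝ) ^ k / d) ^ (1 / 2 - 1 / p.toReal) ≤ D := by
  set S := (PiLp.toEuclidean p (Fin d)).toLinearMap ∘ₗ T
  have hS e : ‖T e‖ ≤ ‖S e‖ := by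
    simpa [S] using PiLp.norm_toLp_le_norm_toLp_of_le h2p (ofLp (T e))
  have hS' e : ‖S e‖ ≤ (d : ℝ) ^ (1 / 2 - 1 / p.toReal) * ‖T e‖ := by
    simpa [S] using PiLp.norm_toLp_le_card_rpow_mul_norm_toLp h2p (ofLp (T e))
  have hA v : 1 ≤ ‖S (toLp p (Pi.single v 1))‖ :=
    ((hT _ (toLp_single_mem_walshPointSet v)).1.trans' (by simp)).trans (hS _)
  have hB u : ‖∑ v, walshRow k u v • S (toLp p (Pi.single v 1))‖ ≤
      (d : ℝ) ^ (1 / 2 - 1 / p.toReal) * (D * ((2 : ℝ) ^ k) ^ (1 / p.toReal)) := by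
    rw [← map_toLp_walshRow, ← norm_toLp_walshRow]
    exact (hS' _).trans (by gcongr; exact (hT _ (toLp_walshRow_mem_walshPointSet u)).2)
  have key := two_pow_mul_sq_le_sq_of_walsh_sum zero_le_one hA hB
  rw [one_pow, mul_one] at key
  have hsqrt := (Real.sqrt_le_sqrt key).trans_eq (Real.sqrt_sq (by positivity))
  rw [Real.sqrt_eq_rpow, ← Real.div_rpow_sub_mul_rpow_sub_mul_rpow (by positivity) (d := d)
    (by positivity) _ (1 / p.toReal)] at hsqrt
  have hpos : 0 < (d : ℝ) ^ (1 / 2 - 1 / p.toReal) * ((2 : ℝ) ^ k) ^ (1 / p.toReal) := by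
    positivity
  refine le_of_mul_le_mul_right ?_ hpos
  linear_combination hsqrt

end Distortion

/-- Here `(n - 1) / (2d) = 2^k / d`, and for `p = ∞` the exponent reads `1 / p.toReal = 1 / 0 = 0`. -/
theorem stmt_6 (p : ℝ≥0∞) [Fact (1 ≤ p)] (k : ℕ) (d : ℕ) (D : ℝ) (hD : 1 ≤ D)
    (T : PiLp p (fun _ : Fin k → Bool => ℝ) →ₗ[ℝ] PiLp p (fun _ : Fin d => ℝ))
    (hT : ∀ u ∈ walshPointSet p k, ∀ v ∈ walshPointSet p k,
      ‖u - v‖ ≤ ‖T u - T v‖ ∧ ‖T u - T v‖ ≤ D * ‖u - v‖) :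
    ((2 : ℝ) ^ k / d) ^ |1 / p.toReal - 1 / 2| ≤ D := by
  have hT0 : ∀ x ∈ walshPointSet p k, ‖x‖ ≤ ‖T x‖ ∧ ‖T x‖ ≤ D * ‖x‖ := fun x hx => by
    simpa using hT x hx 0 zero_mem_walshPointSet
  rcases Nat.eq_zero_or_pos d with rfl | hd
  · simpa using (Real.zero_rpow_le_one _).trans hD
  have hp0 : p ≠ 0 := (zero_lt_one.trans_le Fact.out).ne'
  rcases le_total p 2 with hp2 | h2p
  · have h : 1 / 2 ≤ 1 / p.toReal := by
      simpa [ENNReal.toReal_inv] using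
        ENNReal.toReal_mono (ENNReal.inv_ne_top.2 hp0) (ENNReal.inv_le_inv.2 hp2)
    rw [abs_of_nonneg (sub_nonneg.2 h)]
    exact two_pow_div_rpow_le_of_le_two hp2 hd (zero_le_one.trans hD) hT0
  · have h : 1 / p.toReal ≤ 1 / 2 := by
      simpa [ENNReal.toReal_inv] using ENNReal.toReal_mono (by simp) (ENNReal.inv_le_inv.2 h2p)
    rw [abs_of_nonpos (sub_nonpos.2 h), neg_sub]
    exact two_pow_div_rpow_le_of_two_le h2p hd (zero_le_one.trans hD) hT0
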